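/- For every c ∈ (0,1) and every x ∈ ℝ, the staircase boundary functions satisfy ∫_{{x₀ ∈ ℝ : d_c⁻¹(x) ≤ x₀ ≤ g_c⁻¹(x)}} ν(x₀) dx₀ = c, where g_c⁻¹ and d_c⁻¹ are the generalized inverses g_c⁻¹(x) := sup{y ∈ ℝ : g_c(y) ≤ x} and d_c⁻¹(x) := inf{y ∈ ℝ : d_c(y) ≥ x} taken in the extended reals. -/
import Mathlib


open MeasureTheory

/-- The generalized inverse `g⁻¹(x) = sup {y ∈ ℝ : g(y) ≤ x}` in the extended reals
(`sup ∅ = ⊥ = -∞`). -/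
noncomputable def ginv (g : ℝ → EReal) (x : ℝ) : EReal :=
  sSup (Real.toEReal '' {y : ℝ | g y ≤ (x : EReal)})

/-- The generalized inverse `d⁻¹(x) = inf {y ∈ ℝ : d(y) ≥ x}` in the extended reals
(`inf ∅ = ⊤ = +∞`). -/
noncomputable def dinv (d : ℝ → EReal) (x : ℝ) : EReal :=
  sInf (Real.toEReal '' {y : ℝ | (x : EReal) ≤ d y})

/-- The cumulative distribution function `Ξ(x) = ∫_{-∞}^x ν`. -/
noncomputable def Xi (ν : ℝ → ℝ) (x : ℝ) : ℝ := ∫ y in Set.Iic x, ν y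

/-- The left staircase boundary function `g_c`. -/
noncomputable def gc (ν Ξinv : ℝ → ℝ) (c : ℝ) (x : ℝ) : EReal :=
  if x ≤ Ξinv c then ⊥ else ((Ξinv (Xi ν x - c / 2) : ℝ) : EReal)

/-- The right staircase boundary function `d_c`. -/
noncomputable def dc (ν Ξinv : ℝ → ℝ) (c : ℝ) (x : ℝ) : EReal :=
  if x < Ξinv (1 - c) then ((Ξinv (Xi ν x + c / 2) : ℝ) : EReal) else ⊤

lemma Xi_sub (ν : ℝ → ℝ) (hνint : Integrable ν) {a b : ℝ} (hab : a ≤ b) :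
    Xi ν b - Xi ν a = ∫ y in Set.Ioc a b, ν y := by
  have h : Set.Iic a ∪ Set.Ioc a b = Set.Iic b := Set.Iic_union_Ioc_eq_Iic hab
  have := setIntegral_union (Set.Iic_disjoint_Ioc le_rfl) measurableSet_Ioc
    (hνint.integrableOn (s := Set.Iic a)) (hνint.integrableOn (s := Set.Ioc a b))
  rw [h] at this
  simp only [Xi]
  rw [this]; ring

lemma Xi_strictMono (ν : ℝ → ℝ) (hνc : Continuous ν) (hνpos : ∀ x, 0 < ν x)
    (hνint : Integrable ν) : StrictMono (Xi ν) := by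
  intro a b hab
  have h1 : 0 < ∫ y in Set.Ioc a b, ν y := by
    rw [← intervalIntegral.integral_of_le hab.le]
    exact intervalIntegral.intervalIntegral_pos_of_pos
      (hνc.intervalIntegrable a b) hνpos hab
  have := Xi_sub ν hνint hab.le
  linarith

lemma Ioc_pos (ν : ℝ → ℝ) (hνc : Continuous ν) (hνpos : ∀ x, 0 < ν x) {a b : ℝ}
    (hab : a < b) : 0 < ∫ y in Set.Ioc a b, ν y := by
  rw [← intervalIntegral.integral_of_le hab.le]
  exact intervalIntegral.intervalIntegral_pos_of_pos (hνc.intervalIntegrable a b) hνpos hab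

lemma Xi_pos (ν : ℝ → ℝ) (hνc : Continuous ν) (hνpos : ∀ x, 0 < ν x)
    (hνint : Integrable ν) (y : ℝ) : 0 < Xi ν y := by
  have h1 : 0 < ∫ t in Set.Ioc (y-1) y, ν t := Ioc_pos ν hνc hνpos (by linarith)
  have h2 : ∫ t in Set.Ioc (y-1) y, ν t ≤ Xi ν y :=
    setIntegral_mono_set hνint.integrableOn (ae_of_all _ fun t => (hνpos t).le)
      (HasSubset.Subset.eventuallyLE Set.Ioc_subset_Iic_self)
  linarith

lemma Xi_add_Ioi (ν : ℝ → ℝ) (hνint : Integrable ν) (hν1 : ∫ x, ν x = 1) (y : ℝ) :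
    Xi ν y + ∫ t in Set.Ioi y, ν t = 1 := by
  have := integral_add_compl (measurableSet_Iic (a := y)) hνint
  rw [Set.compl_Iic] at this
  rw [Xi, this, hν1]

lemma Xi_lt_one (ν : ℝ → ℝ) (hνc : Continuous ν) (hνpos : ∀ x, 0 < ν x)
    (hνint : Integrable ν) (hν1 : ∫ x, ν x = 1) (y : ℝ) : Xi ν y < 1 := by
  have h1 : 0 < ∫ t in Set.Ioc y (y+1), ν t := Ioc_pos ν hνc hνpos (by linarith)
  have h2 : ∫ t in Set.Ioc y (y+1), ν t ≤ ∫ t in Set.Ioi y, ν t :=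
    setIntegral_mono_set hνint.integrableOn (ae_of_all _ fun t => (hνpos t).le)
      (HasSubset.Subset.eventuallyLE Set.Ioc_subset_Ioi_self)
  have := Xi_add_Ioi ν hνint hν1 y
  linarith

lemma sSup_image_Iic (b : ℝ) : sSup (Real.toEReal '' Set.Iic b) = (b : EReal) := by
  apply le_antisymm
  · apply sSup_le; rintro _ ⟨y, hy, rfl⟩; exact EReal.coe_le_coe_iff.mpr hy
  · exact le_sSup ⟨b, Set.self_mem_Iic, rfl⟩

lemma sSup_image_univ : sSup (Real.toEReal '' (Set.univ : Set ℝ)) = ⊤ := by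
  rw [sSup_eq_top]
  intro b hb
  obtain ⟨r, hr1, _⟩ := EReal.exists_between_coe_real hb
  exact ⟨r, ⟨r, trivial, rfl⟩, hr1⟩

lemma sInf_image_Ici (b : ℝ) : sInf (Real.toEReal '' Set.Ici b) = (b : EReal) := by
  apply le_antisymm
  · exact sInf_le ⟨b, Set.self_mem_Ici, rfl⟩
  · apply le_sInf; rintro _ ⟨y, hy, rfl⟩; exact EReal.coe_le_coe_iff.mpr hy

lemma sInf_image_univ : sInf (Real.toEReal '' (Set.univ : Set ℝ)) = ⊥ := by
  rw [sInf_eq_bot]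
  intro b hb
  obtain ⟨r, _, hr2⟩ := EReal.exists_between_coe_real hb
  exact ⟨r, ⟨r, trivial, rfl⟩, hr2⟩

theorem staircase_constant_mass
    (ν : ℝ → ℝ) (hνc : Continuous ν) (hνpos : ∀ x, 0 < ν x)
    (hνint : Integrable ν) (hν1 : ∫ x, ν x = 1)
    (Ξinv : ℝ → ℝ)
    (hΞ₁ : ∀ u ∈ Set.Ioo (0 : ℝ) 1, Xi ν (Ξinv u) = u)
    (hΞ₂ : ∀ x : ℝ, Ξinv (Xi ν x) = x)
    (c : ℝ) (hc : c ∈ Set.Ioo (0 : ℝ) 1) (x : ℝ) :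
    ∫ x₀ in {x₀ : ℝ |
        dinv (dc ν Ξinv c) x ≤ (x₀ : EReal) ∧ (x₀ : EReal) ≤ ginv (gc ν Ξinv c) x},
      ν x₀ = c := by
  obtain ⟨hc0, hc1⟩ := hc
  have Ximono := Xi_strictMono ν hνc hνpos hνint
  have hXpos := Xi_pos ν hνc hνpos hνint
  have hXlt1 := Xi_lt_one ν hνc hνpos hνint hν1
  set a := Xi ν x with ha_def
  have ha0 : 0 < a := hXpos x
  have ha1 : a < 1 := hXlt1 x
  have key1 : ∀ u ∈ Set.Ioo (0:ℝ) 1, ∀ y : ℝ, (y ≤ Ξinv u ↔ Xi ν y ≤ u) := by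
    intro u hu y
    rw [← Ximono.le_iff_le, hΞ₁ u hu]
  have key2 : ∀ u ∈ Set.Ioo (0:ℝ) 1, ∀ y : ℝ, (Ξinv u ≤ y ↔ u ≤ Xi ν y) := by
    intro u hu y
    rw [← Ximono.le_iff_le, hΞ₁ u hu]
  have hcIoo : c ∈ Set.Ioo (0:ℝ) 1 := ⟨hc0, hc1⟩
  have h1cIoo : (1 - c) ∈ Set.Ioo (0:ℝ) 1 := ⟨by linarith, by linarith⟩
  -- pointwise characterizations
  have hgc_val : ∀ y : ℝ, ¬ (y ≤ Ξinv c) →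
      (gc ν Ξinv c y ≤ (x:EReal) ↔ Xi ν y ≤ a + c/2) := by
    intro y hy
    have hcy : c < Xi ν y := by
      by_contra h; push_neg at h; exact hy ((key1 c hcIoo y).mpr h)
    have hw : Xi ν y - c/2 ∈ Set.Ioo (0:ℝ) 1 := ⟨by linarith, by linarith [hXlt1 y]⟩
    rw [gc, if_neg hy, EReal.coe_le_coe_iff, key2 _ hw x]
    constructor <;> intro h <;> linarith
  have hdc_val : ∀ y : ℝ, y < Ξinv (1-c) →
      ((x:EReal) ≤ dc ν Ξinv c y ↔ a - c/2 ≤ Xi ν y) := by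
    intro y hy
    have hcy : Xi ν y < 1 - c := by
      by_contra h; push_neg at h
      exact absurd ((key2 (1-c) h1cIoo y).mpr h) (not_le.mpr hy)
    have hw : Xi ν y + c/2 ∈ Set.Ioo (0:ℝ) 1 := ⟨by linarith [hXpos y], by linarith⟩
    rw [dc, if_pos hy, EReal.coe_le_coe_iff, key1 _ hw x]
    constructor <;> intro h <;> linarith
  -- set computations
  have hSgIic : ∀ M, M ∈ Set.Ioo (0:ℝ) 1 → c ≤ M →
      (∀ y : ℝ, c < Xi ν y → (Xi ν y ≤ a + c/2 ↔ Xi ν y ≤ M)) →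
      {y : ℝ | gc ν Ξinv c y ≤ (x:EReal)} = Set.Iic (Ξinv M) := by
    intro M hM hcM hiff
    ext y
    simp only [Set.mem_setOf_eq, Set.mem_Iic]
    by_cases hy : y ≤ Ξinv c
    · have h2 : Ξinv c ≤ Ξinv M := (key1 M hM _).mpr (by rw [hΞ₁ c hcIoo]; exact hcM)
      simp only [gc, if_pos hy]
      exact ⟨fun _ => hy.trans h2, fun _ => bot_le⟩
    · have hcy : c < Xi ν y := by
        by_contra h; push_neg at h; exact hy ((key1 c hcIoo y).mpr h)
      rw [hgc_val y hy, hiff y hcy, key1 M hM y]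
  have hSg_univ : 1 ≤ a + c/2 → {y : ℝ | gc ν Ξinv c y ≤ (x:EReal)} = Set.univ := by
    intro h
    ext y; simp only [Set.mem_setOf_eq, Set.mem_univ, iff_true]
    by_cases hy : y ≤ Ξinv c
    · rw [gc, if_pos hy]; exact bot_le
    · rw [hgc_val y hy]; linarith [hXlt1 y]
  have hSdIci : ∀ m, m ∈ Set.Ioo (0:ℝ) 1 → m ≤ 1 - c →
      (∀ y : ℝ, Xi ν y < 1 - c → (a - c/2 ≤ Xi ν y ↔ m ≤ Xi ν y)) →
      {y : ℝ | (x:EReal) ≤ dc ν Ξinv c y} = Set.Ici (Ξinv m) := by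
    intro m hm hm1c hiff
    ext y
    simp only [Set.mem_setOf_eq, Set.mem_Ici]
    by_cases hy : y < Ξinv (1-c)
    · have hcy : Xi ν y < 1 - c := by
        by_contra h; push_neg at h
        exact absurd ((key2 (1-c) h1cIoo y).mpr h) (not_le.mpr hy)
      rw [hdc_val y hy, hiff y hcy, key2 m hm y]
    · push_neg at hy
      have h2 : Ξinv m ≤ Ξinv (1-c) := (key1 (1-c) h1cIoo _).mpr (by rw [hΞ₁ m hm]; exact hm1c)
      simp only [dc, if_neg (not_lt.mpr hy)]
      exact ⟨fun _ => h2.trans hy, fun _ => le_top⟩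
  have hSd_univ : a - c/2 ≤ 0 → {y : ℝ | (x:EReal) ≤ dc ν Ξinv c y} = Set.univ := by
    intro h
    ext y; simp only [Set.mem_setOf_eq, Set.mem_univ, iff_true]
    by_cases hy : y < Ξinv (1-c)
    · rw [hdc_val y hy]; linarith [hXpos y]
    · rw [dc, if_neg hy]; exact le_top
  rcases le_or_gt a (c/2) with hB | hA'
  · -- case B : a ≤ c/2
    have hdinv : dinv (dc ν Ξinv c) x = ⊥ := by
      rw [dinv, hSd_univ (by linarith), sInf_image_univ]
    have hginv : ginv (gc ν Ξinv c) x = ((Ξinv c : ℝ) : EReal) := by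
      rw [ginv, hSgIic c hcIoo le_rfl (fun y hy => ⟨fun h => by linarith, fun h => by linarith⟩),
        sSup_image_Iic]
    have hset : {x₀ : ℝ | dinv (dc ν Ξinv c) x ≤ (x₀:EReal) ∧ (x₀:EReal) ≤ ginv (gc ν Ξinv c) x}
        = Set.Iic (Ξinv c) := by
      ext t
      simp [hdinv, hginv, EReal.coe_le_coe_iff, Set.mem_Iic]
    rw [hset]
    exact hΞ₁ c hcIoo
  rcases le_or_gt (1 - c/2) a with hC | hA
  · -- case C : 1 - c/2 ≤ a
    have hdinv : dinv (dc ν Ξinv c) x = ((Ξinv (1-c) : ℝ) : EReal) := by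
      rw [dinv, hSdIci (1-c) h1cIoo le_rfl (fun y hy => ⟨fun h => by linarith, fun h => by linarith⟩),
        sInf_image_Ici]
    have hginv : ginv (gc ν Ξinv c) x = ⊤ := by
      rw [ginv, hSg_univ (by linarith), sSup_image_univ]
    have hset : {x₀ : ℝ | dinv (dc ν Ξinv c) x ≤ (x₀:EReal) ∧ (x₀:EReal) ≤ ginv (gc ν Ξinv c) x}
        = Set.Ici (Ξinv (1-c)) := by
      ext t
      simp [hdinv, hginv, EReal.coe_le_coe_iff, Set.mem_Ici]
    rw [hset, integral_Ici_eq_integral_Ioi]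
    have h2 := Xi_add_Ioi ν hνint hν1 (Ξinv (1-c))
    rw [hΞ₁ (1-c) h1cIoo] at h2
    linarith
  · -- case A : c/2 < a < 1 - c/2
    have hmIoo : a - c/2 ∈ Set.Ioo (0:ℝ) 1 := ⟨by linarith, by linarith⟩
    have hMIoo : a + c/2 ∈ Set.Ioo (0:ℝ) 1 := ⟨by linarith, by linarith⟩
    have hdinv : dinv (dc ν Ξinv c) x = ((Ξinv (a - c/2) : ℝ) : EReal) := by
      rw [dinv, hSdIci (a - c/2) hmIoo (by linarith) (fun y hy => Iff.rfl), sInf_image_Ici]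
    have hginv : ginv (gc ν Ξinv c) x = ((Ξinv (a + c/2) : ℝ) : EReal) := by
      rw [ginv, hSgIic (a + c/2) hMIoo (by linarith) (fun y hy => Iff.rfl), sSup_image_Iic]
    have hset : {x₀ : ℝ | dinv (dc ν Ξinv c) x ≤ (x₀:EReal) ∧ (x₀:EReal) ≤ ginv (gc ν Ξinv c) x}
        = Set.Icc (Ξinv (a - c/2)) (Ξinv (a + c/2)) := by
      ext t
      simp [hdinv, hginv, EReal.coe_le_coe_iff, Set.mem_Icc]
    have hle : Ξinv (a - c/2) ≤ Ξinv (a + c/2) :=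
      (key1 _ hMIoo _).mpr (by rw [hΞ₁ _ hmIoo]; linarith)
    have h2 := Xi_sub ν hνint hle
    rw [hΞ₁ _ hmIoo, hΞ₁ _ hMIoo] at h2
    rw [hset, integral_Icc_eq_integral_Ioc, ← h2]
    ring
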